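/- arXiv:1209.0666 — 2 statements merged into one kernel-verified Lean document; each statement's English description precedes it below -/
import Mathlib

section
/- Let Ω = ⋃_{i=1}^n (α_i, β_i) with integer endpoints α_1 < β_1 < ... < α_n < β_n, and suppose Ω is spectral with a spectrum Λ whose minimal period equals k/|Ω| for some positive integer k. Then k divides |Ω| (which is a positive integer). -/
/-! Writing `F(t) = ∫_Ω e^{2πitx} dx`, integer endpoints make
`2πit F(t) = ∑ᵢ (e^{2πitβᵢ} - e^{2πitαᵢ})` a `1`-periodic function of `t` vanishing at `0`.
Hence if `λ ∈ Λ` and `λ + 1 ∉ Λ`, the orthogonality relations `F(λ - μ) = 0`, `μ ∈ Λ \ {λ}`,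
shift to `F(λ + 1 - μ) = 0` for all `μ ∈ Λ`, so `e_{λ+1}` is orthogonal to the whole basis,
which is absurd. Thus `1` is a period of `Λ`, and the periods of `Λ` form a subgroup of `ℝ`
generated by the minimal period `k / |Ω|`; so `1 = m k / |Ω|` for an integer `m`. -/

open MeasureTheory Complex Set Bornology

/-- The exponential function `e_λ(x) = e^{2πiλx}`. -/
noncomputable def expf (l : ℝ) : ℝ → ℂ := fun x =>
  Complex.exp (2 * Real.pi * Complex.I * (l : ℂ) * (x : ℂ))

/-- `Λ` is a spectrum for `Ω`: the exponentials `e_λ`, `λ ∈ Λ`, form an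
orthogonal basis of `L²(Ω)` (mutually orthogonal and complete). -/
def IsSpectrum (Ω Λ : Set ℝ) : Prop :=
  (∀ l ∈ Λ, ∀ m ∈ Λ, l ≠ m →
    (∫ x in Ω, expf l x * (starRingEnd ℂ) (expf m x)) = 0) ∧
  (∀ f : ℝ → ℂ, MemLp f 2 (volume.restrict Ω) →
    (∀ l ∈ Λ, (∫ x in Ω, f x * (starRingEnd ℂ) (expf l x)) = 0) →
    f =ᵐ[volume.restrict Ω] 0)

open scoped Function Pointwise

lemma expf_mul_conj_expf (l m x : ℝ) :
    expf l x * (starRingEnd ℂ) (expf m x) = expf (l - m) x := by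
  simp only [expf, ← Complex.exp_conj, map_mul, map_ofNat, Complex.conj_I, Complex.conj_ofReal,
    ← Complex.exp_add, Complex.ofReal_sub]
  congr 1
  ring

lemma norm_expf (l x : ℝ) : ‖expf l x‖ = 1 := by
  rw [expf, show 2 * (Real.pi : ℂ) * I * l * x = ((2 * Real.pi * l * x : ℝ) : ℂ) * I by
    push_cast; ring, Complex.norm_exp_ofReal_mul_I]

lemma continuous_expf (l : ℝ) : Continuous (expf l) := by
  unfold expf; fun_prop

lemma memLp_expf {μ : Measure ℝ} [IsFiniteMeasure μ] (l : ℝ) : MemLp (expf l) 2 μ :=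
  MemLp.of_bound (continuous_expf l).aestronglyMeasurable 1
    (Filter.Eventually.of_forall fun x => (norm_expf l x).le)

lemma not_expf_ae_eq_zero {μ : Measure ℝ} (hμ : μ ≠ 0) (l : ℝ) : ¬ expf l =ᵐ[μ] 0 := by
  intro h
  have hfalse : ∀ᵐ x ∂μ, False := h.mono fun x hx => Complex.exp_ne_zero _ hx
  rw [Filter.eventually_false_iff_eq_bot, ae_eq_bot] at hfalse
  exact hμ hfalse

lemma expf_add_intCast_intCast (t : ℝ) (m j : ℤ) : expf (t + m) j = expf t j := by
  simp only [expf]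
  push_cast
  rw [show 2 * (Real.pi : ℂ) * I * (t + m) * j
      = 2 * Real.pi * I * t * j + (m * j : ℤ) * (2 * Real.pi * I) by push_cast; ring,
    Complex.exp_add, Complex.exp_int_mul_two_pi_mul_I, mul_one]

lemma two_pi_I_mul_integral_expf_Ioo {a b : ℝ} (hab : a ≤ b) (t : ℝ) :
    2 * Real.pi * I * t * ∫ x in Ioo a b, expf t x = expf t b - expf t a := by
  rcases eq_or_ne t 0 with rfl | ht
  · simp [expf]
  have hc : 2 * (Real.pi : ℂ) * I * t ≠ 0 := by simp [ht, Real.pi_ne_zero]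
  rw [← integral_Ioc_eq_integral_Ioo, ← intervalIntegral.integral_of_le hab]
  simp only [expf]
  rw [integral_exp_mul_complex hc, mul_div_cancel₀ _ hc]

lemma pairwise_disjoint_Ioo_of_le {ι : Type*} [LinearOrder ι] {a b : ι → ℝ}
    (hord : ∀ i j, i < j → b i ≤ a j) : Pairwise (Disjoint on fun i => Ioo (a i) (b i)) := by
  have key : ∀ i j, i < j → Disjoint (Ioo (a i) (b i)) (Ioo (a j) (b j)) := fun i j hij =>
    Set.disjoint_left.2 fun x hi hj => (hi.2.trans_le (hord i j hij)).not_gt hj.1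
  intro i j hij
  rcases hij.lt_or_gt with h | h
  · exact key i j h
  · exact (key j i h).symm

lemma two_pi_I_mul_integral_expf_iUnion_Ioo {ι : Type*} [Fintype ι] {a b : ι → ℝ}
    (hab : ∀ i, a i ≤ b i) (hdisj : Pairwise (Disjoint on fun i => Ioo (a i) (b i))) (t : ℝ) :
    2 * Real.pi * I * t * ∫ x in ⋃ i, Ioo (a i) (b i), expf t x
      = ∑ i, (expf t (b i) - expf t (a i)) := by
  rw [integral_iUnion (fun _ => measurableSet_Ioo) hdisj
    (integrableOn_finite_iUnion.2 fun _ => (continuous_expf t).integrableOn_Icc.mono_set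
      Ioo_subset_Icc_self), tsum_fintype, Finset.mul_sum]
  exact Finset.sum_congr rfl fun i _ => two_pi_I_mul_integral_expf_Ioo (hab i) t

lemma mul_integral_expf_add_intCast_iUnion_Ioo {ι : Type*} [Fintype ι] {α β : ι → ℤ}
    (hab : ∀ i, α i ≤ β i) (hdisj : Pairwise (Disjoint on fun i => Ioo (α i : ℝ) (β i)))
    (m : ℤ) (t : ℝ) :
    ((t + m : ℝ) : ℂ) * ∫ x in ⋃ i, Ioo (α i : ℝ) (β i), expf (t + m) x
      = t * ∫ x in ⋃ i, Ioo (α i : ℝ) (β i), expf t x := by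
  have hab' : ∀ i, (α i : ℝ) ≤ β i := fun i => by exact_mod_cast hab i
  have h2pi : 2 * (Real.pi : ℂ) * I ≠ 0 := by simp [Real.pi_ne_zero]
  refine mul_left_cancel₀ h2pi ?_
  simp only [← mul_assoc]
  rw [two_pi_I_mul_integral_expf_iUnion_Ioo hab' hdisj,
    two_pi_I_mul_integral_expf_iUnion_Ioo hab' hdisj]
  simp only [expf_add_intCast_intCast]

lemma exists_zsmul_eq_of_isLeast_period {G : Type*} [AddCommGroup G] [LinearOrder G]
    [IsOrderedAddMonoid G] [Archimedean G] {Λ : Set G} {q p : G}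
    (hq : IsLeast {q | 0 < q ∧ ∀ x, x ∈ Λ ↔ x + q ∈ Λ} q) (hp : ∀ x, x ∈ Λ ↔ x + p ∈ Λ) :
    ∃ m : ℤ, m • q = p := by
  have hmem : ∀ p, p ∈ AddAction.stabilizer G Λ ↔ ∀ x, x ∈ Λ ↔ x + p ∈ Λ := fun p => by
    simp only [AddAction.mem_stabilizer_set, vadd_eq_add, add_comm p, Iff.comm]
  have hcyc := AddSubgroup.cyclic_of_min (H := AddAction.stabilizer G Λ) (a := q) <| by
    simpa only [hmem, and_comm] using hq
  rw [← AddSubgroup.mem_closure_singleton, ← hcyc, hmem]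
  exact hp

lemma IsSpectrum.add_mem {Ω Λ : Set ℝ} (hspec : IsSpectrum Ω Λ) (hΩ : volume Ω ≠ 0)
    (hΩfin : volume Ω ≠ ⊤) {p : ℝ}
    (hshift : ∀ t : ℝ, ((t + p : ℝ) : ℂ) * ∫ x in Ω, expf (t + p) x = t * ∫ x in Ω, expf t x)
    {l : ℝ} (hl : l ∈ Λ) : l + p ∈ Λ := by
  have : IsFiniteMeasure (volume.restrict Ω) := isFiniteMeasure_restrict.2 hΩfin
  have hinner : ∀ a b, ∫ x in Ω, expf a x * (starRingEnd ℂ) (expf b x)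
      = ∫ x in Ω, expf (a - b) x := fun a b => by simp only [expf_mul_conj_expf]
  by_contra hlp
  refine not_expf_ae_eq_zero (Measure.restrict_eq_zero.not.2 hΩ) (l + p)
    (hspec.2 _ (memLp_expf _) fun m hm => ?_)
  have hne : l + p - m ≠ 0 := sub_ne_zero.2 fun h => hlp (h ▸ hm)
  -- `t ∫_Ω e_t` vanishes at `t = l - m`, by orthogonality or because `t = 0`
  have hzero : ((l - m : ℝ) : ℂ) * ∫ x in Ω, expf (l - m) x = 0 := by
    rcases eq_or_ne l m with rfl | hlm
    · simp
    · rw [← hinner, hspec.1 l hl m hm hlm, mul_zero]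
  have := hshift (l - m)
  rw [hzero, show l - m + p = l + p - m by ring] at this
  rw [hinner]
  exact (mul_eq_zero.1 this).resolve_left (Complex.ofReal_ne_zero.2 hne)

theorem minimal_period_of_spectrum_of_integer_intervals_divides_measure_general
    (n : ℕ) (α β : Fin n → ℤ)
    (hab : ∀ i, α i < β i)
    (hord : ∀ i j : Fin n, i < j → β i < α j)
    (Ω : Set ℝ) (hΩ : Ω = ⋃ i, Ioo ((α i : ℝ)) ((β i : ℝ)))
    (N : ℕ) (hN : 0 < N) (hvol : volume Ω = N)
    (Λ : Set ℝ) (hspec : IsSpectrum Ω Λ)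
    (k : ℕ)
    (hmin : IsLeast {q : ℝ | 0 < q ∧ ∀ x : ℝ, x ∈ Λ ↔ x + q ∈ Λ} ((k : ℝ) / N)) :
    k ∣ N := by
  have hdisj : Pairwise (Disjoint on fun i => Ioo (α i : ℝ) (β i)) :=
    pairwise_disjoint_Ioo_of_le fun i j hij => by exact_mod_cast (hord i j hij).le
  have hshift (m : ℤ) := hΩ ▸ mul_integral_expf_add_intCast_iUnion_Ioo
    (fun i => (hab i).le) hdisj m
  have hΩ0 : volume Ω ≠ 0 := by rw [hvol]; exact_mod_cast hN.ne'
  have hΩfin : volume Ω ≠ ⊤ := hvol ▸ ENNReal.natCast_ne_top N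
  have hper : ∀ x, x ∈ Λ ↔ x + 1 ∈ Λ := fun x =>
    ⟨fun hx => by simpa using hspec.add_mem hΩ0 hΩfin (hshift 1) hx,
      fun hx => by simpa using hspec.add_mem hΩ0 hΩfin (hshift (-1)) hx⟩
  obtain ⟨m, hm⟩ := exists_zsmul_eq_of_isLeast_period hmin hper
  have hNR : (N : ℝ) ≠ 0 := by exact_mod_cast hN.ne'
  have hmk : (m * k : ℤ) = N := by
    rw [zsmul_eq_mul, mul_div_assoc', div_eq_one_iff_eq hNR] at hm
    exact_mod_cast hm
  exact Int.natCast_dvd_natCast.1 (Dvd.intro_left _ hmk)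

theorem minimal_period_of_spectrum_of_integer_intervals_divides_measure
    (n : ℕ) (hn : 0 < n) (α β : Fin n → ℤ)
    (hab : ∀ i, α i < β i)
    (hord : ∀ i j : Fin n, i < j → β i < α j)
    (Ω : Set ℝ) (hΩ : Ω = ⋃ i, Ioo ((α i : ℝ)) ((β i : ℝ)))
    (N : ℕ) (hN : 0 < N) (hvol : volume Ω = N)
    (Λ : Set ℝ) (hspec : IsSpectrum Ω Λ)
    (k : ℕ) (hk : 0 < k)
    (hmin : IsLeast {q : ℝ | 0 < q ∧ ∀ x : ℝ, x ∈ Λ ↔ x + q ∈ Λ} ((k : ℝ) / N)) :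
    k ∣ N :=
  minimal_period_of_spectrum_of_integer_intervals_divides_measure_general n α β hab hord Ω hΩ N hN
    hvol Λ hspec k hmin
end

section
/- Let Ω ⊆ ℝ be a bounded Lebesgue measurable set of measure 1. Suppose Ω is spectral with spectrum Λ containing 0 and with period p ∈ ℕ (Λ + p = Λ). Then Ω is a p-fold tile of ℝ by (1/p)ℤ-translations: for almost every x ∈ ℝ, the number of integers j with x ∈ Ω + j/p is exactly p; equivalently ∑_{j∈ℤ} χ_Ω(x + j/p) = p for a.e. x ∈ ℝ. -/
open MeasureTheory Complex Set Bornology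

/-!
Since `0 ∈ Λ` and `Λ + p = Λ`, the spectrum contains `pℤ`, so orthogonality of `e_{kp}` to `e_0`
makes `∫_Ω e^{2πikpx} dx` vanish for every `k ≠ 0`. Up to the factor `p` these integrals are the
Fourier coefficients of the `1/p`-periodic function `x ↦ ∑_{j ∈ ℤ} χ_Ω(x + j/p)`, which is therefore
a.e. equal to its mean `p |Ω| = p`.
-/

open Function

lemma zsmul_mem_of_forall_mem_iff_add_mem {G : Type*} [AddGroup G] {Λ : Set G} {a : G}
    (h0 : 0 ∈ Λ) (hper : ∀ x, x ∈ Λ ↔ x + a ∈ Λ) (k : ℤ) : k • a ∈ Λ := by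
  induction k using Int.induction_on with
  | zero => simpa using h0
  | succ k ih => simpa [add_zsmul] using (hper _).1 ih
  | pred k ih => exact (hper _).2 (by simpa [sub_zsmul] using ih)

lemma expf_zero : expf 0 = 1 := by
  ext x
  simp [expf]

lemma IsSpectrum.setIntegral_expf_eq_zero {Ω Λ : Set ℝ} (hspec : IsSpectrum Ω Λ) (h0 : 0 ∈ Λ)
    {l : ℝ} (hl : l ∈ Λ) (hl0 : l ≠ 0) : ∫ x in Ω, expf l x = 0 := by
  simpa [expf_zero] using hspec.1 l hl 0 h0 hl0

lemma fourier_coe_eq_expf {T : ℝ} (n : ℤ) (x : ℝ) :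
    fourier n (x : AddCircle T) = expf (n / T) x := by
  rw [fourier_coe_apply, expf]
  congr 1
  push_cast
  ring

lemma Bornology.IsBounded.exists_subset_Ioc_add_nat_mul {s : Set ℝ} (hs : IsBounded s) {T : ℝ}
    (hT : 0 < T) : ∃ (t : ℝ) (n : ℕ), s ⊆ Ioc t (t + n * T) := by
  obtain ⟨r, hr⟩ := hs.subset_ball 0
  obtain ⟨n, hn⟩ := exists_nat_ge (2 * r / T)
  refine ⟨-r, n, hr.trans fun x hx => ?_⟩
  rw [Real.ball_eq_Ioo, zero_sub, zero_add] at hx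
  rw [div_le_iff₀ hT] at hn
  exact ⟨hx.1, by linarith [hx.2]⟩

lemma Function.Periodic.ae_of_ae_restrict_Ioc {α : Type*} {f : ℝ → α} {T : ℝ} (hf : Periodic f T)
    (hT : 0 < T) {P : α → Prop} {t : ℝ} (h : ∀ᵐ x ∂volume.restrict (Ioc t (t + T)), P (f x)) :
    ∀ᵐ x, P (f x) := by
  rw [ae_iff] at h ⊢
  refine (isAddFundamentalDomain_Ioc hT t).measure_zero_of_invariant _ (fun g => ?_) ?_
  · obtain ⟨g, k, rfl⟩ := g
    ext x
    simp [mem_vadd_set_iff_neg_vadd_mem, AddSubgroup.vadd_def, neg_add_eq_sub, hf.sub_int_mul_eq]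
  · rwa [Measure.restrict_apply' measurableSet_Ioc] at h

section Fourier

open AddCircle

variable {T : ℝ} [Fact (0 < T)]

lemma fourierCoeff_const (c : ℂ) : fourierCoeff (fun _ : AddCircle T => c) = Pi.single 0 c := by
  have hc : (fun _ : AddCircle T => c) = c • ⇑(fourier 0) := by
    ext
    simp
  ext n
  rw [hc, fourierCoeff.const_smul, fourierCoeff_fourier]
  by_cases hn : n = 0 <;> simp [hn]

lemma ae_eq_const_of_fourierCoeff_eq_zero {f : AddCircle T → ℂ} (hf : MemLp f 2 haarAddCircle)
    (h : ∀ n ≠ 0, fourierCoeff f n = 0) : f =ᵐ[haarAddCircle] fun _ => fourierCoeff f 0 := by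
  have hc : MemLp (fun _ : AddCircle T => fourierCoeff f 0) 2 (haarAddCircle (T := T)) :=
    memLp_const _
  have hLp : hf.toLp f = hc.toLp _ := by
    apply fourierBasis.repr.injective
    ext n
    rw [fourierBasis_repr, fourierBasis_repr, fourierCoeff_congr_ae hf.coeFn_toLp,
      fourierCoeff_congr_ae hc.coeFn_toLp, fourierCoeff_const]
    by_cases hn : n = 0
    · simp [hn]
    · simp [hn, h n hn]
  exact hf.coeFn_toLp.symm.trans (hLp ▸ hc.coeFn_toLp)

lemma ae_restrict_Ioc_eq_const_of_fourierCoeff_liftIoc_eq_zero {t : ℝ} {f : ℝ → ℂ}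
    (hf : MemLp f 2 (volume.restrict (Ioc t (t + T))))
    (h : ∀ n ≠ 0, fourierCoeff (liftIoc T t f) n = 0) :
    f =ᵐ[volume.restrict (Ioc t (t + T))] fun _ => fourierCoeff (liftIoc T t f) 0 := by
  have hF := ae_eq_const_of_fourierCoeff_eq_zero hf.memLp_liftIoc.haarAddCircle h
  replace hF : liftIoc T t f =ᵐ[volume] fun _ => fourierCoeff (liftIoc T t f) 0 := by
    rw [AddCircle.volume_eq_smul_haarAddCircle]
    exact Measure.ae_smul_measure hF _
  filter_upwards [(AddCircle.measurePreserving_mk T t).quasiMeasurePreserving.ae_eq_comp hF,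
    ae_restrict_mem measurableSet_Ioc] with x hx hmem
  rwa [comp_apply, liftIoc_coe_apply hmem] at hx

end Fourier

noncomputable def latticeCount (Ω : Set ℝ) (T x : ℝ) : ℕ := {j : ℤ | x + j * T ∈ Ω}.ncard

lemma latticeCount_periodic (Ω : Set ℝ) (T : ℝ) : Periodic (latticeCount Ω T) T := by
  intro x
  have hshift : {j : ℤ | x + T + j * T ∈ Ω} = (· + 1) ⁻¹' {j : ℤ | x + j * T ∈ Ω} := by
    ext j
    simp only [mem_ofPred_eq, mem_preimage, Int.cast_add, Int.cast_one]
    ring_nf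
  rw [latticeCount, latticeCount, hshift, ncard_preimage_of_injective_subset_range
    (add_left_injective 1) fun j _ => ⟨j - 1, sub_add_cancel j 1⟩]

lemma latticeCount_eq_sum_indicator {Ω : Set ℝ} {T t : ℝ} {n : ℕ} (hT : 0 < T)
    (hΩ : Ω ⊆ Ioc t (t + n * T)) {x : ℝ} (hx : x ∈ Ioc t (t + T)) :
    (latticeCount Ω T x : ℂ) = ∑ i ∈ Finset.range n, Ω.indicator 1 (x + i * T) := by
  classical
  have hcount : {j : ℤ | x + j * T ∈ Ω} =
      Nat.cast '' (({i ∈ Finset.range n | x + (i : ℝ) * T ∈ Ω} : Finset ℕ) : Set ℕ) := by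
    ext j
    simp only [mem_ofPred_eq, Finset.coe_filter, Finset.mem_range, mem_image]
    refine ⟨fun hj => ?_, ?_⟩
    · obtain ⟨hlo, hhi⟩ := hΩ hj
      have hj0 : ((-1 : ℤ) : ℝ) < j := by push_cast; nlinarith [hx.1, hx.2]
      have hjn : (j : ℝ) < n := by nlinarith [hx.1, hx.2]
      lift j to ℕ using by have := Int.cast_lt.1 hj0; omega
      exact ⟨j, ⟨by exact_mod_cast hjn, by exact_mod_cast hj⟩, rfl⟩
    · rintro ⟨i, ⟨-, hi⟩, rfl⟩
      exact_mod_cast hi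
  rw [latticeCount, hcount, ncard_image_of_injective _ Nat.cast_injective, ncard_coe_finset,
    Finset.natCast_card_filter]
  simp [indicator_apply]

lemma intervalIntegral_mul_sum_indicator_eq_setIntegral {Ω : Set ℝ} (hΩm : MeasurableSet Ω)
    {T t : ℝ} (hT : 0 < T) {n : ℕ} (hΩ : Ω ⊆ Ioc t (t + n * T)) {e : ℝ → ℂ} (he : Continuous e)
    (hper : Periodic e T) :
    ∫ x in t..t + T, e x * ∑ i ∈ Finset.range n, Ω.indicator 1 (x + i * T) = ∫ x in Ω, e x := by
  have hint : ∀ a b, IntervalIntegrable (Ω.indicator e) volume a b := fun a b =>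
    ⟨(he.intervalIntegrable a b).1.indicator hΩm, (he.intervalIntegrable a b).2.indicator hΩm⟩
  calc _ = ∫ x in t..t + T, ∑ i ∈ Finset.range n, Ω.indicator e (x + i * T) := by
          congr with x
          rw [Finset.mul_sum]
          congr with i
          rw [← hper.nat_mul i x]
          by_cases hi : x + i * T ∈ Ω <;> simp [hi]
    _ = ∑ i ∈ Finset.range n, ∫ x in t..t + T, Ω.indicator e (x + i * T) :=
          intervalIntegral.integral_finsetSum fun i _ => by
            simpa using (hint (t + i * T) (t + T + i * T)).comp_add_right (i * T)
    _ = ∑ i ∈ Finset.range n, ∫ x in t + i * T..t + (i + 1 : ℕ) * T, Ω.indicator e x := by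
          congr with i
          rw [intervalIntegral.integral_comp_add_right]
          push_cast
          ring_nf
    _ = ∫ x in t..t + n * T, Ω.indicator e x := by
          simpa using intervalIntegral.sum_integral_adjacent_intervals
            (a := fun i : ℕ => t + i * T) fun k _ => hint _ _
    _ = ∫ x in Ω, e x := by
          rw [intervalIntegral.integral_of_le (le_add_of_nonneg_right (by positivity)),
            setIntegral_indicator hΩm, inter_eq_right.2 hΩ]

lemma memLp_sum_indicator_translates {Ω : Set ℝ} (hΩm : MeasurableSet Ω) (T : ℝ) (n : ℕ)
    (μ : Measure ℝ) [IsFiniteMeasure μ] :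
    MemLp (fun x => ∑ i ∈ Finset.range n, Ω.indicator (1 : ℝ → ℂ) (x + i * T)) 2 μ := by
  have hmeas : Measurable fun x => ∑ i ∈ Finset.range n, Ω.indicator (1 : ℝ → ℂ) (x + i * T) :=
    Finset.measurable_sum _ fun i _ =>
      (measurable_const.indicator hΩm).comp (measurable_add_const _)
  refine MemLp.of_bound hmeas.aestronglyMeasurable n (ae_of_all _ fun x => ?_)
  calc _ ≤ ∑ i ∈ Finset.range n, ‖Ω.indicator (1 : ℝ → ℂ) (x + i * T)‖ := norm_sum_le _ _
    _ ≤ ∑ i ∈ Finset.range n, (1 : ℝ) := Finset.sum_le_sum fun i _ =>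
        (norm_indicator_le_norm_self _ _).trans_eq (by simp)
    _ = n := by simp

lemma fourierCoeff_liftIoc_sum_indicator_translates {Ω : Set ℝ} (hΩm : MeasurableSet Ω)
    {T t : ℝ} [hT : Fact (0 < T)] {n : ℕ} (hΩ : Ω ⊆ Ioc t (t + n * T)) (k : ℤ) :
    fourierCoeff (AddCircle.liftIoc T t fun x => ∑ i ∈ Finset.range n, Ω.indicator 1 (x + i * T))
      k = T⁻¹ • ∫ x in Ω, expf (-k / T) x := by
  rw [fourierCoeff_eq_intervalIntegral _ k t, one_div]
  congr 1
  calc _ = ∫ x in t..t + T, fourier (-k) (x : AddCircle T) *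
        ∑ i ∈ Finset.range n, Ω.indicator 1 (x + i * T) := by
        refine intervalIntegral.integral_congr_ae (ae_of_all _ fun x hx => ?_)
        rw [uIoc_of_le (le_add_of_nonneg_right hT.out.le)] at hx
        rw [AddCircle.liftIoc_coe_apply hx, smul_eq_mul]
    _ = ∫ x in Ω, fourier (-k) (x : AddCircle T) :=
        intervalIntegral_mul_sum_indicator_eq_setIntegral hΩm hT.out hΩ (by fun_prop)
          fun x => by simp
    _ = ∫ x in Ω, expf (-k / T) x := by simp_rw [fourier_coe_eq_expf, Int.cast_neg]

theorem ae_latticeCount_eq_of_setIntegral_expf_eq_zero {Ω : Set ℝ} (hbd : IsBounded Ω)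
    (hΩm : MeasurableSet Ω) {T : ℝ} (hT : 0 < T)
    (hΩ : ∀ k : ℤ, k ≠ 0 → ∫ x in Ω, expf (k / T) x = 0) :
    ∀ᵐ x, T * latticeCount Ω T x = volume.real Ω := by
  have : Fact (0 < T) := ⟨hT⟩
  obtain ⟨t, n, hsub⟩ := hbd.exists_subset_Ioc_add_nat_mul hT
  have hcoeff := fourierCoeff_liftIoc_sum_indicator_translates hΩm hsub
  have hconst := ae_restrict_Ioc_eq_const_of_fourierCoeff_liftIoc_eq_zero
    (memLp_sum_indicator_translates hΩm T n _) fun k hk => by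
      rw [hcoeff, ← Int.cast_neg, hΩ _ (neg_ne_zero.2 hk), smul_zero]
  refine (latticeCount_periodic Ω T).ae_of_ae_restrict_Ioc
    (P := fun N => T * N = volume.real Ω) (t := t) hT ?_
  filter_upwards [hconst, ae_restrict_mem measurableSet_Ioc] with x hx hmem
  rw [hcoeff, Int.cast_zero, neg_zero, zero_div, expf_zero,
    ← latticeCount_eq_sum_indicator hT hsub hmem] at hx
  simp only [Pi.one_apply, integral_const, MeasurableSet.univ, measureReal_restrict_apply,
    univ_inter, real_smul, mul_one, ofReal_inv] at hx
  have hx' : (latticeCount Ω T x : ℝ) = T⁻¹ * volume.real Ω := by exact_mod_cast hx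
  rw [hx', mul_inv_cancel_left₀ hT.ne']

theorem spectral_set_with_periodic_spectrum_p_tiles
    (Ω : Set ℝ) (hbd : IsBounded Ω) (hmeas : MeasurableSet Ω)
    (hvol : volume Ω = 1)
    (Λ : Set ℝ) (hspec : IsSpectrum Ω Λ) (h0 : (0 : ℝ) ∈ Λ)
    (p : ℕ) (hp : 0 < p)
    (hper : ∀ x : ℝ, x ∈ Λ ↔ x + p ∈ Λ) :
    ∀ᵐ x : ℝ ∂volume, ({j : ℤ | x + (j : ℝ) / p ∈ Ω}).ncard = p := by
  have hpR : (0 : ℝ) < p := Nat.cast_pos.2 hp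
  have hfourier (k : ℤ) (hk : k ≠ 0) : ∫ x in Ω, expf (k / (p : ℝ)⁻¹) x = 0 := by
    refine hspec.setIntegral_expf_eq_zero h0 ?_ (by simp [hk, hp.ne'])
    simpa [zsmul_eq_mul, div_inv_eq_mul] using zsmul_mem_of_forall_mem_iff_add_mem h0 hper k
  filter_upwards [ae_latticeCount_eq_of_setIntegral_expf_eq_zero hbd hmeas (inv_pos.2 hpR)
    hfourier] with x hx
  rw [measureReal_def, hvol, ENNReal.toReal_one, inv_mul_eq_one₀ hpR.ne', latticeCount] at hx
  simp only [← div_eq_mul_inv] at hx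
  exact_mod_cast hx.symm
end
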